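/- Let p be a prime, n ≥ 1, and let f : ℤ_p → ℤ_p be an n-unit delay mapping. For each k ≥ 2 let F_k : ℤ/p^{n·k}ℤ → ℤ/p^{n·(k−1)}ℤ be the map induced by f, i.e. F_k(x mod p^{n·k}) = f(x) mod p^{n·(k−1)} (this is well defined by the n-unit delay property). Then f preserves the normalized Haar measure μ_p on ℤ_p if and only if for every k ≥ 2 and every point x ∈ ℤ/p^{n·(k−1)}ℤ, the number #F_k^{−1}(x) of F_k-preimages of x equals p^n. -/

import Mathlib

open MeasureTheory

/-- A function `f : ℤ_[p] → ℤ_[p]` is an *`n`-unit delay* mapping if for all `a, b ∈ ℤ_[p]`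
and all `k ≥ 1`, `a ≡ b (mod p^(n+k))` implies `f a ≡ f b (mod p^k)`. -/
def IsNUnitDelay (p : ℕ) [Fact p.Prime] (n : ℕ) (f : PadicInt p → PadicInt p) : Prop :=
  ∀ k : ℕ, 1 ≤ k → ∀ a b : PadicInt p,
    (p : PadicInt p) ^ (n + k) ∣ a - b → (p : PadicInt p) ^ k ∣ f a - f b

/-!
Reduction modulo `p ^ m` pushes the Haar measure forward to the uniform measure on
`ℤ/p^mℤ`, so the cylinder `{x | x ≡ y mod p^(n(k-1))}` has measure `p^(-n(k-1))`, while its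
preimage under `f` is the union of the `#F_k⁻¹(y)` cylinders of level `nk` lying over
`F_k⁻¹(y)`, of measure `#F_k⁻¹(y) · p^(-nk)`. The two agree iff `#F_k⁻¹(y) = p^n`.
Cylinders form a π-system generating the Borel σ-algebra, and a cylinder of any level is a
union of cylinders of level `n(k-1)` for large `k`; so agreement at these levels is the same
as measure preservation, and `f` is measurable because `f⁻¹` maps cylinders to cylinders.
-/

open Filter Metric Set

namespace MeasureTheory

theorem measure_preimage_eq_of_forall_singleton {α β : Type*} [MeasurableSpace α] [Finite β]
    {μ ν : Measure α} {g₁ g₂ : α → β} (h₁ : ∀ y, MeasurableSet (g₁ ⁻¹' {y}))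
    (h₂ : ∀ y, MeasurableSet (g₂ ⁻¹' {y})) (h : ∀ y, μ (g₁ ⁻¹' {y}) = ν (g₂ ⁻¹' {y}))
    (S : Set β) : μ (g₁ ⁻¹' S) = ν (g₂ ⁻¹' S) := by
  have := Fintype.ofFinite β
  classical
  rw [← S.coe_toFinset, ← sum_measure_preimage_singleton _ fun y _ => h₁ y,
    ← sum_measure_preimage_singleton _ fun y _ => h₂ y]
  exact Finset.sum_congr rfl fun y _ => h y

theorem measure_preimage_addMonoidHom_of_surjective {G H : Type*} [AddGroup G]
    [MeasurableSpace G] [MeasurableAdd G] (μ : Measure G) [μ.IsAddLeftInvariant]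
    [IsProbabilityMeasure μ] [AddGroup H] [Finite H] {g : G →+ H} (hg : Function.Surjective g)
    (hmeas : ∀ y, MeasurableSet (g ⁻¹' {y})) (S : Set H) :
    μ (g ⁻¹' S) = Nat.card S / Nat.card H := by
  have := Fintype.ofFinite H
  classical
  have hfiber (y : H) : μ (g ⁻¹' {y}) = μ (g ⁻¹' {0}) := by
    obtain ⟨x, rfl⟩ := hg y
    rw [← measure_preimage_add μ x]
    congr 1
    ext z
    simp
  have hcard (S : Set H) : μ (g ⁻¹' S) = Nat.card S * μ (g ⁻¹' {0}) := by
    rw [← S.coe_toFinset, ← sum_measure_preimage_singleton _ fun y _ => hmeas y]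
    simp [hfiber]
  have hzero : μ (g ⁻¹' {0}) = (Nat.card H : ENNReal)⁻¹ :=
    ENNReal.eq_inv_of_mul_eq_one_left (by simpa [mul_comm] using (hcard univ).symm)
  rw [hcard, hzero, div_eq_mul_inv]

end MeasureTheory

namespace PadicInt

variable {p : ℕ} [Fact p.Prime]

theorem toZModPow_surjective (m : ℕ) :
    Function.Surjective (toZModPow m : ℤ_[p] → ZMod (p ^ m)) :=
  fun y => ⟨y.val, by simp⟩

theorem preimage_toZModPow_singleton_self (m : ℕ) (x : ℤ_[p]) :
    toZModPow m ⁻¹' {toZModPow m x} = closedBall x ((p : ℝ) ^ (-m : ℤ)) := by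
  ext z
  rw [mem_preimage, mem_singleton_iff, ← sub_eq_zero, ← map_sub, ← RingHom.mem_ker,
    ker_toZModPow, ← norm_le_pow_iff_mem_span_pow, mem_closedBall, dist_eq_norm]

theorem continuous_toZModPow (m : ℕ) : Continuous (toZModPow m : ℤ_[p] → ZMod (p ^ m)) := by
  refine continuous_discrete_rng.2 fun y => ?_
  obtain ⟨x, rfl⟩ := toZModPow_surjective m y
  rw [preimage_toZModPow_singleton_self]
  exact IsUltrametricDist.isOpen_closedBall x
    (zpow_ne_zero _ (by exact_mod_cast (Fact.out : p.Prime).ne_zero))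

theorem measurableSet_preimage_toZModPow [MeasurableSpace ℤ_[p]] [OpensMeasurableSpace ℤ_[p]]
    {m : ℕ} (S : Set (ZMod (p ^ m))) : MeasurableSet (toZModPow m ⁻¹' S) :=
  ((continuous_toZModPow m).isOpen_preimage S (isOpen_discrete S)).measurableSet

theorem preimage_toZModPow_eq_preimage_cast {m m' : ℕ} (h : m ≤ m') (S : Set (ZMod (p ^ m))) :
    toZModPow m ⁻¹' S = toZModPow m' ⁻¹' (ZMod.cast ⁻¹' S) := by
  ext x
  simp [cast_toZModPow _ _ h]

def cylinders (p : ℕ) [Fact p.Prime] : Set (Set ℤ_[p]) :=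
  {s | ∃ m, ∃ S : Set (ZMod (p ^ m)), toZModPow m ⁻¹' S = s}

theorem isTopologicalBasis_cylinders : TopologicalSpace.IsTopologicalBasis (cylinders p) := by
  refine TopologicalSpace.isTopologicalBasis_of_isOpen_of_nhds ?_ fun x U hx hU => ?_
  · rintro _ ⟨m, S, rfl⟩
    exact (continuous_toZModPow m).isOpen_preimage S (isOpen_discrete S)
  · obtain ⟨ε, hε, hball⟩ := Metric.isOpen_iff.1 hU x hx
    obtain ⟨m, hm⟩ := exists_pow_neg_lt p hε
    refine ⟨_, ⟨m, {toZModPow m x}, rfl⟩, rfl, ?_⟩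
    rw [preimage_toZModPow_singleton_self]
    exact (closedBall_subset_ball hm).trans hball

theorem isPiSystem_cylinders : IsPiSystem (cylinders p) := by
  rintro _ ⟨m, S, rfl⟩ _ ⟨m', S', rfl⟩ -
  refine ⟨max m m', ZMod.cast ⁻¹' S ∩ ZMod.cast ⁻¹' S', ?_⟩
  rw [preimage_inter, ← preimage_toZModPow_eq_preimage_cast (le_max_left m m'),
    ← preimage_toZModPow_eq_preimage_cast (le_max_right m m')]

theorem borel_eq_generateFrom_cylinders :
    borel ℤ_[p] = MeasurableSpace.generateFrom (cylinders p) :=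
  isTopologicalBasis_cylinders.borel_eq_generateFrom

theorem forall_mem_cylinders_of_frequently {P : Set ℤ_[p] → Prop}
    (h : ∃ᶠ m in atTop, ∀ S : Set (ZMod (p ^ m)), P (toZModPow m ⁻¹' S)) :
    ∀ s ∈ cylinders p, P s := by
  rintro _ ⟨m, S, rfl⟩
  obtain ⟨m', hm, hP⟩ := frequently_atTop.1 h m
  rw [preimage_toZModPow_eq_preimage_cast hm]
  exact hP _

theorem preimage_preimage_toZModPow_of_comp {a b : ℕ} {f : ℤ_[p] → ℤ_[p]}
    {F : ZMod (p ^ b) → ZMod (p ^ a)} (hF : ∀ x, F (toZModPow b x) = toZModPow a (f x))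
    (S : Set (ZMod (p ^ a))) : f ⁻¹' (toZModPow a ⁻¹' S) = toZModPow b ⁻¹' (F ⁻¹' S) := by
  ext x
  simp [hF]

variable [MeasurableSpace ℤ_[p]] [BorelSpace ℤ_[p]]

theorem measure_preimage_toZModPow (μ : Measure ℤ_[p]) [μ.IsAddHaarMeasure]
    [IsProbabilityMeasure μ] {m : ℕ} (S : Set (ZMod (p ^ m))) :
    μ (toZModPow m ⁻¹' S) = Nat.card S / (p : ENNReal) ^ m := by
  have : NeZero (p ^ m) := ⟨pow_ne_zero m (Fact.out : p.Prime).ne_zero⟩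
  simpa using measure_preimage_addMonoidHom_of_surjective μ (g := (toZModPow m).toAddMonoidHom)
    (toZModPow_surjective m) (fun y => measurableSet_preimage_toZModPow _) S

theorem measurable_of_cylinders {X : Type*} [MeasurableSpace X] {f : X → ℤ_[p]}
    (h : ∀ s ∈ cylinders p, MeasurableSet (f ⁻¹' s)) : Measurable f := by
  rw [BorelSpace.measurable_eq (α := ℤ_[p]), borel_eq_generateFrom_cylinders]
  exact measurable_generateFrom h

theorem measurePreserving_of_cylinders {X : Type*} [MeasurableSpace X] {μ : Measure X}
    {ν : Measure ℤ_[p]} [IsFiniteMeasure ν] {f : X → ℤ_[p]} (hf : Measurable f)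
    (h : ∀ s ∈ cylinders p, μ (f ⁻¹' s) = ν s) : MeasurePreserving f μ ν := by
  have huniv : μ.map f univ = ν univ := by
    rw [Measure.map_apply hf .univ]
    exact h univ ⟨0, univ, rfl⟩
  have : IsFiniteMeasure (μ.map f) := ⟨by rw [huniv]; exact measure_lt_top ν univ⟩
  refine ⟨hf, ext_of_generate_finite _ ?_ isPiSystem_cylinders (fun s hs => ?_) huniv⟩
  · rw [BorelSpace.measurable_eq (α := ℤ_[p]), borel_eq_generateFrom_cylinders]
  · obtain ⟨m, S, rfl⟩ := hs
    rw [Measure.map_apply hf (measurableSet_preimage_toZModPow S), h _ ⟨m, S, rfl⟩]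

theorem measure_preimage_preimage_toZModPow_eq_iff_card (μ : Measure ℤ_[p])
    [μ.IsAddHaarMeasure] [IsProbabilityMeasure μ] {a b : ℕ} (hab : a ≤ b)
    {f : ℤ_[p] → ℤ_[p]} {F : ZMod (p ^ b) → ZMod (p ^ a)}
    (hF : ∀ x, F (toZModPow b x) = toZModPow a (f x)) :
    (∀ S, μ (f ⁻¹' (toZModPow a ⁻¹' S)) = μ (toZModPow a ⁻¹' S)) ↔
      ∀ y, Nat.card (F ⁻¹' {y}) = p ^ (b - a) := by
  obtain ⟨d, rfl⟩ := Nat.exists_eq_add_of_le hab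
  rw [Nat.add_sub_cancel_left]
  have hp : (p : ENNReal) ≠ 0 := by exact_mod_cast (Fact.out : p.Prime).ne_zero
  have hfiber (y : ZMod (p ^ a)) : μ (f ⁻¹' (toZModPow a ⁻¹' {y})) = μ (toZModPow a ⁻¹' {y}) ↔
      Nat.card (F ⁻¹' {y}) = p ^ d := by
    rw [preimage_preimage_toZModPow_of_comp hF, measure_preimage_toZModPow μ (F ⁻¹' {y}),
      measure_preimage_toZModPow μ {y}, Nat.card_unique (α := ({y} : Set _)), Nat.cast_one,
      ENNReal.div_eq_div_iff (pow_ne_zero _ hp) (ENNReal.pow_ne_top (ENNReal.natCast_ne_top p))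
        (pow_ne_zero _ hp) (ENNReal.pow_ne_top (ENNReal.natCast_ne_top p))]
    -- generalized so that `pow_add` does not try to rewrite the type of `F`
    generalize Nat.card (F ⁻¹' {y}) = c
    rw [pow_add, mul_one]
    norm_cast
    exact Nat.mul_right_inj (pow_ne_zero _ (Fact.out : p.Prime).ne_zero)
  refine ⟨fun h y => (hfiber y).1 (h {y}), fun h => ?_⟩
  refine measure_preimage_eq_of_forall_singleton (g₁ := toZModPow a ∘ f) (fun y => ?_)
    (fun y => measurableSet_preimage_toZModPow _) fun y => (hfiber y).2 (h y)
  rw [preimage_comp, preimage_preimage_toZModPow_of_comp hF]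
  exact measurableSet_preimage_toZModPow _

end PadicInt

open PadicInt

theorem nUnitDelay_measurePreserving_iff_card_preimage_general (p : ℕ) [Fact p.Prime] (n : ℕ)
    (hn : 1 ≤ n) [MeasurableSpace (PadicInt p)] [BorelSpace (PadicInt p)]
    (μ : Measure (PadicInt p)) [μ.IsAddHaarMeasure] [IsProbabilityMeasure μ]
    (f : PadicInt p → PadicInt p)
    (F : ∀ k : ℕ, ZMod (p ^ (n * k)) → ZMod (p ^ (n * (k - 1))))
    (hF : ∀ k : ℕ, 2 ≤ k → ∀ x : PadicInt p,
      F k (PadicInt.toZModPow (n * k) x) = PadicInt.toZModPow (n * (k - 1)) (f x)) :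
    MeasurePreserving f μ μ ↔
      ∀ k : ℕ, 2 ≤ k → ∀ y : ZMod (p ^ (n * (k - 1))),
        Nat.card ((F k) ⁻¹' {y}) = p ^ n := by
  have hlevel (k : ℕ) (hk : 2 ≤ k) : (∀ S, μ (f ⁻¹' (toZModPow (n * (k - 1)) ⁻¹' S)) =
      μ (toZModPow (n * (k - 1)) ⁻¹' S)) ↔ ∀ y, Nat.card (F k ⁻¹' {y}) = p ^ n := by
    have hstep : n * k - n * (k - 1) = n := by
      rw [Nat.mul_sub_one, Nat.sub_sub_self (Nat.le_mul_of_pos_right n (by omega))]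
    rw [measure_preimage_preimage_toZModPow_eq_iff_card μ (Nat.mul_le_mul_left n (k.sub_le 1))
      (hF k hk), hstep]
  constructor
  · intro hf k hk
    exact (hlevel k hk).1 fun S =>
      hf.measure_preimage (measurableSet_preimage_toZModPow S).nullMeasurableSet
  · intro hcard
    have hcyl : ∀ s ∈ cylinders p, MeasurableSet (f ⁻¹' s) ∧ μ (f ⁻¹' s) = μ s := by
      refine forall_mem_cylinders_of_frequently (frequently_atTop.2 fun m =>
        ⟨n * (m + 2 - 1), ?_, fun S => ⟨?_, (hlevel (m + 2) le_add_self).2 ?_ S⟩⟩)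
      · exact m.le_succ.trans (Nat.le_mul_of_pos_left _ hn)
      · rw [preimage_preimage_toZModPow_of_comp (hF (m + 2) le_add_self)]
        exact measurableSet_preimage_toZModPow _
      · exact hcard (m + 2) le_add_self
    exact measurePreserving_of_cylinders (measurable_of_cylinders fun s hs => (hcyl s hs).1)
      fun s hs => (hcyl s hs).2

/-- **Criterion of measure-preservation.** Let `f : ℤ_[p] → ℤ_[p]` be an `n`-unit delay
mapping and, for `k ≥ 2`, let `F k : ℤ/p^(n·k)ℤ → ℤ/p^(n·(k-1))ℤ` be the reduction of `f`,
i.e. the (well-defined) map with `F k (x mod p^(n·k)) = f x mod p^(n·(k-1))`. Then `f`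
preserves the normalized Haar measure `μ` on `ℤ_[p]` if and only if for every `k ≥ 2`, every
point `y ∈ ℤ/p^(n·(k-1))ℤ` has exactly `p ^ n` preimages under `F k`. -/
theorem nUnitDelay_measurePreserving_iff_card_preimage (p : ℕ) [Fact p.Prime] (n : ℕ)
    (hn : 1 ≤ n) [MeasurableSpace (PadicInt p)] [BorelSpace (PadicInt p)]
    (μ : Measure (PadicInt p)) [μ.IsAddHaarMeasure] [IsProbabilityMeasure μ]
    (f : PadicInt p → PadicInt p) (hdelay : IsNUnitDelay p n f)
    (F : ∀ k : ℕ, ZMod (p ^ (n * k)) → ZMod (p ^ (n * (k - 1))))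
    (hF : ∀ k : ℕ, 2 ≤ k → ∀ x : PadicInt p,
      F k (PadicInt.toZModPow (n * k) x) = PadicInt.toZModPow (n * (k - 1)) (f x)) :
    MeasurePreserving f μ μ ↔
      ∀ k : ℕ, 2 ≤ k → ∀ y : ZMod (p ^ (n * (k - 1))),
        Nat.card ((F k) ⁻¹' {y}) = p ^ n :=
  nUnitDelay_measurePreserving_iff_card_preimage_general p n hn μ f F hF
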